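/- arXiv:1811.12369 — 3 statements merged into one kernel-verified Lean document; each statement's English description precedes it below -/
import Mathlib

section
/- Let S, T, U be finite sets, let ℓ, ℓ' ≥ 1, let f_j : S → T for j ∈ [ℓ] and g_i : T → U for i ∈ [ℓ'], and let A ⊆ S and C ⊆ U. Then ((*_{i ∈ [ℓ']} M_{g_i}) ·_u (*_{j ∈ [ℓ]} M_{f_j}))_{C,A} = (*_{(i,j) ∈ [ℓ']×[ℓ]} M_{g_i ∘ f_j})_{C,A}. -/
/-- The merge (`*`) of a set of Boolean values: the common value if the set
is a singleton, and `none` (= `u`) otherwise. Intended for nonempty sets. -/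
noncomputable def starSet (S : Set Bool) : Option Bool := by
  classical
  exact if true ∈ S then (if false ∈ S then none else some true)
  else if false ∈ S then some false else none

/-- Resolutions of a partially unstable string: `none` entries may be filled arbitrarily. -/
def res {ι : Type*} (x : ι → Option Bool) : Set (ι → Bool) :=
  {y | ∀ i b, x i = some b → y i = b}

/-- Hazard-free extension of a Boolean function: `f_u(x) = *_{y ∈ res(x)} f(y)`. -/
noncomputable def hfExt {ι κ : Type*} (f : (ι → Bool) → κ → Bool)
    (x : ι → Option Bool) : κ → Option Bool :=
  fun j => starSet {b | ∃ y ∈ res x, f y j = b}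

/-- Boolean matrix multiplication over the semiring `(Bool, or, and)`. -/
def bmul {α β γ : Type*} [Fintype β] (A : α → β → Bool) (B : β → γ → Bool) :
    α → γ → Bool :=
  fun i k => decide (∃ j, A i j = true ∧ B j k = true)

/-- Resolutions of a Kleene matrix. -/
def resM {α β : Type*} (A : α → β → Option Bool) : Set (α → β → Bool) :=
  {A' | ∀ i j b, A i j = some b → A' i j = b}

/-- The hazard-free extension `·_u` of Boolean matrix multiplication. -/
noncomputable def kmul {α β γ : Type*} [Fintype β]
    (A : α → β → Option Bool) (B : β → γ → Option Bool) : α → γ → Option Bool :=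
  fun i k => starSet {b | ∃ A' ∈ resM A, ∃ B' ∈ resM B, bmul A' B' i k = b}

/-- Universal encoding of a function between finite sets: the Boolean matrix with
rows indexed by subsets of the codomain and columns by subsets of the domain,
with a `1` at `(B, A)` iff `f(A) ⊆ B`. -/
def Menc {S T : Type*} [DecidableEq T] (f : S → T) (Bs : Finset T) (As : Finset S) : Bool :=
  decide (∀ a ∈ As, f a ∈ Bs)

lemma starSet_true {S : Set Bool} (h1 : true ∈ S) (h2 : false ∉ S) :
    starSet S = some true := by
  unfold starSet; split_ifs <;> simp_all

lemma starSet_false {S : Set Bool} (h1 : false ∈ S) (h2 : true ∉ S) :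
    starSet S = some false := by
  unfold starSet; split_ifs <;> simp_all

lemma starSet_none {S : Set Bool} (h1 : true ∈ S) (h2 : false ∈ S) :
    starSet S = none := by
  unfold starSet; split_ifs <;> simp_all

lemma starSet_eq_true_iff {S : Set Bool} :
    starSet S = some true ↔ true ∈ S ∧ false ∉ S := by
  unfold starSet; split_ifs <;> simp_all

lemma starSet_eq_false_iff {S : Set Bool} :
    starSet S = some false ↔ false ∈ S ∧ true ∉ S := by
  unfold starSet; split_ifs <;> simp_all

lemma getD_mem_resM {α β : Type*} (X : α → β → Option Bool) (b : Bool) :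
    (fun i j => (X i j).getD b) ∈ resM X := by
  intro i j c h; simp [h]

lemma starSet_getD_true {S : Set Bool} (h : true ∈ S) :
    (starSet S).getD true = true := by
  unfold starSet; split_ifs <;> simp_all

lemma starSet_getD_false {S : Set Bool} (h : false ∈ S) :
    (starSet S).getD false = false := by
  unfold starSet; split_ifs <;> simp_all

/-- `((*_{i} M_{g_i}) ·_u (*_{j} M_{f_j}))_{C,A} = (*_{(i,j)} M_{g_i ∘ f_j})_{C,A}`,
where `*` of a (nonempty) family of Boolean matrices is taken entrywise. -/
theorem kmul_star_Menc (S T U : Type) [Fintype S] [Fintype T] [Fintype U]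
    [DecidableEq S] [DecidableEq T] [DecidableEq U]
    (l l' : ℕ) (hl : 1 ≤ l) (hl' : 1 ≤ l')
    (f : Fin l → S → T) (g : Fin l' → T → U)
    (A : Finset S) (C : Finset U) :
    kmul (fun (C' : Finset U) (B' : Finset T) => starSet (Set.range fun i => Menc (g i) C' B'))
         (fun (B' : Finset T) (A' : Finset S) => starSet (Set.range fun j => Menc (f j) B' A'))
         C A
      = starSet (Set.range fun p : Fin l' × Fin l => Menc (g p.1 ∘ f p.2) C A) := by
  classical
  set X : Finset U → Finset T → Option Bool :=
    fun C' B' => starSet (Set.range fun i => Menc (g i) C' B') with hXdef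
  set Y : Finset T → Finset S → Option Bool :=
    fun B' A' => starSet (Set.range fun j => Menc (f j) B' A') with hYdef
  have i0 : Fin l' := ⟨0, hl'⟩
  have j0 : Fin l := ⟨0, hl⟩
  -- the set whose starSet is the LHS entry
  show starSet {b | ∃ X' ∈ resM X, ∃ Y' ∈ resM Y, bmul X' Y' C A = b} = _
  by_cases h1 : ∀ p : Fin l' × Fin l, Menc (g p.1 ∘ f p.2) C A = true
  · -- all compositions true
    -- the witness column
    set B0 : Finset T := Finset.univ.biUnion (fun j : Fin l => A.image (f j)) with hB0
    have hmemB0 : ∀ (j : Fin l), ∀ a ∈ A, f j a ∈ B0 := by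
      intro j a ha
      simp only [hB0, Finset.mem_biUnion, Finset.mem_univ, Finset.mem_image]
      exact ⟨j, trivial, a, ha, rfl⟩
    have hYB0 : ∀ j, Menc (f j) B0 A = true := by
      intro j; simp only [Menc, decide_eq_true_iff]; exact hmemB0 j
    have hXB0 : ∀ i, Menc (g i) C B0 = true := by
      intro i; simp only [Menc, decide_eq_true_iff]
      intro b hb
      simp only [hB0, Finset.mem_biUnion, Finset.mem_univ, Finset.mem_image] at hb
      obtain ⟨j, -, a, ha, rfl⟩ := hb
      have := h1 (i, j)
      simp only [Menc, decide_eq_true_iff] at this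
      exact this a ha
    have hY : Y B0 A = some true := by
      apply starSet_true
      · exact ⟨j0, hYB0 j0⟩
      · rintro ⟨j, hj⟩; simp [hYB0 j] at hj
    have hX : X C B0 = some true := by
      apply starSet_true
      · exact ⟨i0, hXB0 i0⟩
      · rintro ⟨i, hi⟩; simp [hXB0 i] at hi
    have hbmul : ∀ X' ∈ resM X, ∀ Y' ∈ resM Y, bmul X' Y' C A = true := by
      intro X' hX' Y' hY'
      simp only [bmul, decide_eq_true_iff]
      exact ⟨B0, hX' C B0 true hX, hY' B0 A true hY⟩
    rw [starSet_true (S := Set.range _) ⟨(i0, j0), h1 _⟩ (by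
      rintro ⟨p, hp⟩; simp [h1 p] at hp)]
    apply starSet_true
    · exact ⟨_, getD_mem_resM X true, _, getD_mem_resM Y true,
        hbmul _ (getD_mem_resM X true) _ (getD_mem_resM Y true)⟩
    · rintro ⟨X', hX', Y', hY', hb⟩
      rw [hbmul X' hX' Y' hY'] at hb; exact Bool.noConfusion hb
  · by_cases h2 : ∀ p : Fin l' × Fin l, Menc (g p.1 ∘ f p.2) C A = false
    · -- all compositions false
      have hbmul : ∀ X' ∈ resM X, ∀ Y' ∈ resM Y, bmul X' Y' C A = false := by
        intro X' hX' Y' hY'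
        simp only [bmul, decide_eq_false_iff_not, not_exists, not_and]
        intro B' hXB hYB
        by_cases hB : ∃ j, Menc (f j) B' A = true
        · obtain ⟨j, hj⟩ := hB
          simp only [Menc, decide_eq_true_iff] at hj
          have hXfalse : X C B' = some false := by
            apply starSet_false
            · refine ⟨i0, ?_⟩
              simp only [Menc, decide_eq_false_iff_not]
              intro hall
              have := h2 (i0, j)
              simp only [Menc, decide_eq_false_iff_not] at this
              exact this (fun a ha => hall (f j a) (hj a ha))
            · rintro ⟨i, hi⟩
              simp only [Menc, decide_eq_true_iff] at hi
              have := h2 (i, j)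
              simp only [Menc, decide_eq_false_iff_not] at this
              exact this (fun a ha => hi (f j a) (hj a ha))
          have := hX' C B' false hXfalse
          rw [this] at hXB; exact Bool.noConfusion hXB
        · push_neg at hB
          have hYfalse : Y B' A = some false := by
            apply starSet_false
            · refine ⟨j0, ?_⟩
              cases h : Menc (f j0) B' A
              · exact h
              · exact absurd h (hB j0)
            · rintro ⟨j, hj⟩; exact hB j hj
          have := hY' B' A false hYfalse
          rw [this] at hYB; exact Bool.noConfusion hYB
      rw [starSet_false (S := Set.range _) ⟨(i0, j0), h2 _⟩ (by
        rintro ⟨p, hp⟩; simp [h2 p] at hp)]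
      apply starSet_false
      · exact ⟨_, getD_mem_resM X true, _, getD_mem_resM Y true,
          hbmul _ (getD_mem_resM X true) _ (getD_mem_resM Y true)⟩
      · rintro ⟨X', hX', Y', hY', hb⟩
        rw [hbmul X' hX' Y' hY'] at hb; exact Bool.noConfusion hb
    · -- mixed case
      push_neg at h1 h2
      obtain ⟨pf, hpf⟩ := h1   -- Menc (g pf.1 ∘ f pf.2) C A ≠ true, hence = false
      obtain ⟨pt, hpt⟩ := h2   -- Menc (g pt.1 ∘ f pt.2) C A ≠ false, hence = true
      have hpf' : Menc (g pf.1 ∘ f pf.2) C A = false := by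
        cases h : Menc (g pf.1 ∘ f pf.2) C A
        · rfl
        · exact absurd h hpf
      have hpt' : Menc (g pt.1 ∘ f pt.2) C A = true := by
        cases h : Menc (g pt.1 ∘ f pt.2) C A
        · exact absurd h hpt
        · rfl
      rw [starSet_none (S := Set.range _) ⟨pt, hpt'⟩ ⟨pf, hpf'⟩]
      apply starSet_none
      · -- true is achievable: resolve all unknowns to true
        refine ⟨_, getD_mem_resM X true, _, getD_mem_resM Y true, ?_⟩
        simp only [bmul, decide_eq_true_iff]
        set B1 : Finset T := A.image (f pt.2) with hB1
        refine ⟨B1, ?_, ?_⟩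
        · -- X C B1 resolves to true
          have htr : true ∈ Set.range fun i => Menc (g i) C B1 := by
            refine ⟨pt.1, ?_⟩
            simp only [Menc, decide_eq_true_iff]
            intro b hb
            simp only [hB1, Finset.mem_image] at hb
            obtain ⟨a, ha, rfl⟩ := hb
            simp only [Menc, decide_eq_true_iff, Function.comp] at hpt'
            exact hpt' a ha
          exact starSet_getD_true htr
        · -- Y B1 A resolves to true
          have htr : true ∈ Set.range fun j => Menc (f j) B1 A := by
            refine ⟨pt.2, ?_⟩
            simp only [Menc, decide_eq_true_iff]
            intro a ha
            simp only [hB1, Finset.mem_image]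
            exact ⟨a, ha, rfl⟩
          exact starSet_getD_true htr
      · -- false is achievable: resolve all unknowns to false
        refine ⟨_, getD_mem_resM X false, _, getD_mem_resM Y false, ?_⟩
        simp only [bmul, decide_eq_false_iff_not, not_exists, not_and]
        intro B' hXB hYB
        -- from hXB : (X C B').getD false = true, so X C B' = some true
        have hXsome : X C B' = some true := by
          cases h : X C B' with
          | none => simp [h] at hXB
          | some b =>
            cases b
            · simp [h] at hXB
            · rfl
        have hYsome : Y B' A = some true := by
          cases h : Y B' A with
          | none => simp [h] at hYB
          | some b =>
            cases b
            · simp [h] at hYB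
            · rfl
        have hXsome : (true ∈ Set.range fun i => Menc (g i) C B') ∧
            (false ∉ Set.range fun i => Menc (g i) C B') := starSet_eq_true_iff.mp hXsome
        have hYsome : (true ∈ Set.range fun j => Menc (f j) B' A) ∧
            (false ∉ Set.range fun j => Menc (f j) B' A) := starSet_eq_true_iff.mp hYsome
        -- all Menc (g i) C B' = true and all Menc (f j) B' A = true
        have hgi : ∀ i, Menc (g i) C B' = true := by
          intro i
          cases h : Menc (g i) C B'
          · exact absurd ⟨i, h⟩ hXsome.2
          · rfl
        have hfj : ∀ j, Menc (f j) B' A = true := by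
          intro j
          cases h : Menc (f j) B' A
          · exact absurd ⟨j, h⟩ hYsome.2
          · rfl
        -- contradiction with the false pair pf
        simp only [Menc, decide_eq_false_iff_not, Function.comp] at hpf'
        apply hpf'
        intro a ha
        have h1 := hfj pf.2
        simp only [Menc, decide_eq_true_iff] at h1
        have h2 := hgi pf.1
        simp only [Menc, decide_eq_true_iff] at h2
        exact h2 (f pf.2 a) (h1 a ha)
end

section
/- Let γ : [M] → B^n and γ' : [M] → B^m be k-recoverable codes, and let γ^{-1} : B^n → [M] be an extension of the decoding function of γ witnessing k-recoverability. Then for every p ≤ k and every range r = ⟨i,i+p⟩_M of p+1 consecutive residues modulo M, the hazard-free extension of γ' ∘ γ^{-1} maps the p-imprecise extended codeword *_{j∈r} γ(j mod M) to *_{j∈r} γ'(j mod M). -/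
/-- The extended codeword `*_{j ∈ ⟨i,i+p⟩_M} γ(j mod M)` of the range of the
`p+1` consecutive residues modulo `M` starting at `i`. -/
noncomputable def extCW {n : ℕ} (γ : ℕ → Fin n → Bool) (M i p : ℕ) : Fin n → Option Bool :=
  fun t => starSet {b | ∃ j ≤ p, γ ((i + j) % M) t = b}

/-- `dec` witnesses `k`-recoverability of the code `γ : [M] → B^n`: it extends the
decoding function and maps every resolution of an extended codeword of imprecision
at most `k` into its range. -/
def RecovWitness {n : ℕ} (γ : ℕ → Fin n → Bool) (M k : ℕ)
    (dec : (Fin n → Bool) → ℕ) : Prop :=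
  (∀ y, dec y < M) ∧
    ∀ i < M, ∀ p ≤ k, ∀ y ∈ res (extCW γ M i p), ∃ j ≤ p, dec y = (i + j) % M

lemma starSet_mem_eq {S : Set Bool} {b c : Bool} (h : starSet S = some b) (hc : c ∈ S) :
    c = b := by
  unfold starSet at h
  split_ifs at h with h1 h2 h3 <;> cases c <;> simp_all

lemma gamma_mem_res {n M i p : ℕ} (γ : ℕ → Fin n → Bool) {j : ℕ} (hj : j ≤ p) :
    γ ((i + j) % M) ∈ res (extCW γ M i p) := by
  intro t b hb
  exact starSet_mem_eq hb ⟨j, hj, rfl⟩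

lemma dec_codeword {n M k : ℕ} {γ : ℕ → Fin n → Bool} {dec : (Fin n → Bool) → ℕ}
    (hdec : RecovWitness γ M k dec) {q : ℕ} (hq : q < M) : dec (γ q) = q := by
  have hres : γ q ∈ res (extCW γ M q 0) := by
    have := gamma_mem_res (i := q) (M := M) (p := 0) γ (le_refl 0)
    simpa [Nat.mod_eq_of_lt hq] using this
  obtain ⟨j, hj, hdj⟩ := hdec.2 q hq 0 (Nat.zero_le k) (γ q) hres
  interval_cases j
  simpa [Nat.mod_eq_of_lt hq] using hdj

/-- given `k`-recoverable codes `γ : [M] → B^n` and `γ' : [M] → B^m`,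
and a witnessing extension `dec` of the decoding function of `γ`, the hazard-free
extension of `γ' ∘ γ^{-1}` maps the `p`-imprecise extended codeword
`*_{j∈r} γ(j mod M)` to `*_{j∈r} γ'(j mod M)`, for every `p ≤ k`. -/
theorem hfExt_translate (n m M k : ℕ) (γ : ℕ → Fin n → Bool) (γ' : ℕ → Fin m → Bool)
    (hinj : Set.InjOn γ (Set.Iio M)) (hinj' : Set.InjOn γ' (Set.Iio M))
    (dec : (Fin n → Bool) → ℕ) (hdec : RecovWitness γ M k dec)
    (hrec' : ∃ dec' : (Fin m → Bool) → ℕ, RecovWitness γ' M k dec')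
    (i : ℕ) (hi : i < M) (p : ℕ) (hp : p ≤ k) :
    hfExt (fun y => γ' (dec y)) (extCW γ M i p) = extCW γ' M i p := by
  funext t
  unfold hfExt extCW
  congr 1
  ext b
  constructor
  · rintro ⟨y, hy, rfl⟩
    obtain ⟨j, hj, hdj⟩ := hdec.2 i hi p hp y hy
    exact ⟨j, hj, show γ' ((i + j) % M) t = γ' (dec y) t by rw [hdj]⟩
  · rintro ⟨j, hj, rfl⟩
    refine ⟨γ ((i + j) % M), gamma_mem_res γ hj, ?_⟩
    show γ' (dec (γ ((i + j) % M))) t = γ' ((i + j) % M) t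
    rw [dec_codeword hdec (Nat.mod_lt _ (by omega))]
end

section
/- Let k ≥ 1, and let w be an extended codeword of the code γ_{k+1,k} : [2(k+1)] → B^{k+1} of imprecision at most ⌈k/2⌉. Then for every v ∈ res(w), the modified decoding function satisfies γ̃^{-1}_{k+1,k}(v) ∈ r_w (modulo 2(k+1)). -/
instance : Std.Commutative xor := ⟨by decide⟩
instance : Std.Associative xor := ⟨by decide⟩

/-- The parity (xor of all bits) of a bit string. -/
def par {m : ℕ} (z : Fin m → Bool) : Bool := Finset.univ.fold xor false z

/-- The `n`-bit binary reflected Gray code (first bit is the reflection bit). -/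
def rg : (n : ℕ) → ℕ → Fin n → Bool
  | 0, _ => Fin.elim0
  | n + 1, x =>
      Fin.cons (decide (2 ^ n ≤ x)) (rg n (if x < 2 ^ n then x else 2 ^ (n + 1) - 1 - x))

/-- `ξ_n(i) = 1^i 0^{n-i}` (positions are 0-indexed here). -/
def xi (n i : ℕ) : Fin n → Bool := fun t => decide ((t : ℕ) < i)

/-- `ξ̄_n(i) = 0^i 1^{n-i}`, the bitwise complement of `ξ_n(i)`. -/
def xibar (n i : ℕ) : Fin n → Bool := fun t => decide (i ≤ (t : ℕ))

/-- The hybrid code `γ_{n,k} : [(k+1)·2^{n-k}] → B^n`: an `(n-k)`-bit reflected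
Gray code prefix followed by a `k`-bit unary part (`ξ_k` or its complement,
according to the parity of the prefix). -/
def gammaNK (n k : ℕ) (i : ℕ) : Fin n → Bool := fun t =>
  if h : (t : ℕ) < n - k then
    rg (n - k) (i / (k + 1)) ⟨t, h⟩
  else
    (if par (rg (n - k) (i / (k + 1))) = false then xi k (i % (k + 1))
     else xibar k (i % (k + 1)))
      ⟨(t : ℕ) - (n - k), by have := t.isLt; omega⟩

/-- The modified decoding function `γ̃^{-1}_{k+1,k} : B^{k+1} → [2(k+1)]`
(strings 1-indexed in the description; here `v 0` is `v_1` and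
`v ⟨1 + k/2, _⟩` is `v_{2+⌊k/2⌋}`). -/
def gammaTilde (k : ℕ) (hk : 1 ≤ k) (v : Fin (k + 1) → Bool) : ℕ :=
  let b1 := v 0
  let b2 := v ⟨1 + k / 2, by omega⟩
  if b1 = false ∧ b2 = false then
    (Finset.univ.filter (fun t : Fin (k + 1) =>
      1 ≤ (t : ℕ) ∧ (t : ℕ) ≤ k / 2 ∧ v t = true)).card
  else if b1 = false ∧ b2 = true then
    1 + k / 2 + (Finset.univ.filter (fun t : Fin (k + 1) =>
      2 + k / 2 ≤ (t : ℕ) ∧ v t = true)).card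
  else if b1 = true ∧ b2 = true then
    (k + 1) + (Finset.univ.filter (fun t : Fin (k + 1) =>
      1 ≤ (t : ℕ) ∧ (t : ℕ) ≤ k / 2 ∧ v t = false)).card
  else
    (k + 2 + k / 2) + (Finset.univ.filter (fun t : Fin (k + 1) =>
      2 + k / 2 ≤ (t : ℕ) ∧ v t = false)).card

section Aux
open Finset

lemma starSet_eq_some {S : Set Bool} {b : Bool} (h1 : b ∈ S) (h2 : (!b) ∉ S) :
    starSet S = some b := by
  unfold starSet
  cases b <;> simp_all

/-- simplified form of `gammaNK (k+1) k` for arguments below `2(k+1)` -/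
def gg (k j : ℕ) (t : Fin (k + 1)) : Bool :=
  if (t : ℕ) = 0 then decide (k + 1 ≤ j)
  else decide ((t : ℕ) ≤ j ∧ j ≤ (t : ℕ) + k)

lemma rg_one' (n : ℕ) (hn : n = 1) (x : ℕ) (q : Fin n) : rg n x q = decide (1 ≤ x) := by
  subst hn
  have hq : q = 0 := Subsingleton.elim _ _
  subst hq
  show rg (0 + 1) x 0 = _
  simp only [rg, Fin.cons_zero]
  norm_num

lemma par_rg1' (n : ℕ) (hn : n = 1) (x : ℕ) : par (rg n x) = decide (1 ≤ x) := by
  subst hn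
  have h : (Finset.univ : Finset (Fin 1)) = {0} := by
    ext t; simp [Fin.eq_zero t]
  rw [par, h, Finset.fold_singleton, Bool.xor_false]
  exact rg_one' 1 rfl x 0

lemma gammaNK_eq_gg (k : ℕ) (j : ℕ) (hj : j < 2 * (k + 1)) (t : Fin (k + 1)) :
    gammaNK (k + 1) k j t = gg k j t := by
  have e : k + 1 - k = 1 := by omega
  have hlt := t.isLt
  show (if h : (t : ℕ) < (k+1) - k then _ else _) = gg k j t
  rcases Nat.lt_or_ge j (k + 1) with hjk | hjk
  · have hq : j / (k + 1) = 0 := Nat.div_eq_of_lt hjk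
    have hr : j % (k + 1) = j := Nat.mod_eq_of_lt hjk
    by_cases ht : (t : ℕ) < (k + 1) - k
    · rw [dif_pos ht, rg_one' _ e, gg, if_pos (by omega : (t:ℕ) = 0), hq]
      simp
      omega
    · rw [dif_neg ht, par_rg1' _ e, hq]
      rw [if_pos (by norm_num), gg, if_neg (by omega : ¬ (t:ℕ) = 0), hr]
      show decide ((t:ℕ) - ((k+1) - k) < j) = _
      rw [decide_eq_decide]
      omega
  · have hq : j / (k + 1) = 1 := by
      have h2 : j = (j - (k+1)) + (k+1) := by omega
      rw [h2, Nat.add_div_right _ (by omega), Nat.div_eq_of_lt (by omega)]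
    have hr : j % (k + 1) = j - (k + 1) := by
      have h2 : j = (j - (k+1)) + (k+1) := by omega
      rw [h2, Nat.add_mod_right, Nat.mod_eq_of_lt (by omega)]
      omega
    by_cases ht : (t : ℕ) < (k + 1) - k
    · rw [dif_pos ht, rg_one' _ e, gg, if_pos (by omega : (t:ℕ) = 0), hq]
      simp
      omega
    · rw [dif_neg ht, par_rg1' _ e, hq]
      rw [if_neg (by norm_num), gg, if_neg (by omega : ¬ (t:ℕ) = 0), hr]
      show decide (j - (k+1) ≤ (t:ℕ) - ((k+1) - k)) = _
      rw [decide_eq_decide]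
      omega

lemma ggc (k m : ℕ) (hm : m ≤ k) (t : Fin (k + 1)) :
    gg k (m + (k + 1)) t = ! gg k m t := by
  have hlt := t.isLt
  by_cases ht : (t : ℕ) = 0
  · rw [gg, gg, if_pos ht, if_pos ht]
    have h1 : k + 1 ≤ m + (k + 1) := by omega
    have h2 : ¬ (k + 1 ≤ m) := by omega
    simp [h1, h2]
  · rw [gg, gg, if_neg ht, if_neg ht, ← decide_not, decide_eq_decide]
    omega

end Aux
section Cards
open Finset

lemma aux_card (n a b : ℕ) (hb : b < n) :
    (Finset.univ.filter fun t : Fin n => a ≤ (t : ℕ) ∧ (t : ℕ) ≤ b).card = b + 1 - a := by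
  rcases le_or_gt a b with h | h
  · have ha : a < n := lt_of_le_of_lt h hb
    have he : (Finset.univ.filter fun t : Fin n => a ≤ (t : ℕ) ∧ (t : ℕ) ≤ b)
        = Finset.Icc ⟨a, ha⟩ ⟨b, hb⟩ := by
      ext t
      simp [Finset.mem_Icc, Fin.le_def]
    rw [he, Fin.card_Icc]
  · have he : (Finset.univ.filter fun t : Fin n => a ≤ (t : ℕ) ∧ (t : ℕ) ≤ b) = ∅ := by
      ext t
      simp
      omega
    rw [he]
    simp
    omega

lemma card_filter_le (k a b : ℕ) (hb : b ≤ k) (P : Fin (k + 1) → Prop) [DecidablePred P]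
    (hP : ∀ t, P t → a ≤ (t : ℕ) ∧ (t : ℕ) ≤ b) :
    (Finset.univ.filter P).card ≤ b + 1 - a := by
  rw [← aux_card (k + 1) a b (by omega)]
  apply Finset.card_le_card
  intro t ht
  simp only [Finset.mem_filter, Finset.mem_univ, true_and] at ht ⊢
  exact hP t ht

lemma le_card_filter (k a b : ℕ) (hb : b ≤ k) (P : Fin (k + 1) → Prop) [DecidablePred P]
    (hP : ∀ t : Fin (k + 1), a ≤ (t : ℕ) → (t : ℕ) ≤ b → P t) :
    b + 1 - a ≤ (Finset.univ.filter P).card := by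
  rw [← aux_card (k + 1) a b (by omega)]
  apply Finset.card_le_card
  intro t ht
  simp only [Finset.mem_filter, Finset.mem_univ, true_and] at ht ⊢
  exact hP t ht.1 ht.2

end Cards
section TildeEq
open Finset

variable {k : ℕ} (hk : 1 ≤ k) (v : Fin (k + 1) → Bool)

lemma gammaTilde_eq00 (h1 : v 0 = false) (h2 : v ⟨1 + k / 2, by omega⟩ = false) :
    gammaTilde k hk v = (Finset.univ.filter (fun t : Fin (k + 1) =>
      1 ≤ (t : ℕ) ∧ (t : ℕ) ≤ k / 2 ∧ v t = true)).card := by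
  simp only [gammaTilde, h1, h2]
  simp

lemma gammaTilde_eq01 (h1 : v 0 = false) (h2 : v ⟨1 + k / 2, by omega⟩ = true) :
    gammaTilde k hk v = 1 + k / 2 + (Finset.univ.filter (fun t : Fin (k + 1) =>
      2 + k / 2 ≤ (t : ℕ) ∧ v t = true)).card := by
  simp only [gammaTilde, h1, h2]
  simp

lemma gammaTilde_eq11 (h1 : v 0 = true) (h2 : v ⟨1 + k / 2, by omega⟩ = true) :
    gammaTilde k hk v = (k + 1) + (Finset.univ.filter (fun t : Fin (k + 1) =>
      1 ≤ (t : ℕ) ∧ (t : ℕ) ≤ k / 2 ∧ v t = false)).card := by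
  simp only [gammaTilde, h1, h2]
  simp

lemma gammaTilde_eq10 (h1 : v 0 = true) (h2 : v ⟨1 + k / 2, by omega⟩ = false) :
    gammaTilde k hk v = (k + 2 + k / 2) + (Finset.univ.filter (fun t : Fin (k + 1) =>
      2 + k / 2 ≤ (t : ℕ) ∧ v t = false)).card := by
  simp only [gammaTilde, h1, h2]
  simp

end TildeEq
section Core
open Finset

lemma core (k : ℕ) (hk : 1 ≤ k) (i p : ℕ) (hik : i ≤ k) (hp : p ≤ (k + 1) / 2)
    (v : Fin (k + 1) → Bool)
    (hv0 : i + p ≤ k → v 0 = false)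
    (hvt : ∀ t : Fin (k + 1), 1 ≤ (t : ℕ) →
      ¬(i < (t : ℕ) ∧ (t : ℕ) ≤ i + p) →
      ¬(i < (t : ℕ) + k + 1 ∧ (t : ℕ) + k + 1 ≤ i + p) →
      v t = decide ((t : ℕ) ≤ i ∧ i ≤ (t : ℕ) + k)) :
    i ≤ gammaTilde k hk v ∧ gammaTilde k hk v ≤ i + p := by
  rcases le_or_gt (i + p) (k / 2) with hA | hnA
  · -- Case A : whole range in [0, k/2]
    have hb1 : v 0 = false := hv0 (by omega)
    have hb2 : v ⟨1 + k / 2, by omega⟩ = false := by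
      rw [hvt ⟨1 + k / 2, by omega⟩ (by show 1 ≤ 1 + k / 2; omega)
        (by show ¬(i < 1 + k / 2 ∧ 1 + k / 2 ≤ i + p); omega)
        (by show ¬(i < 1 + k / 2 + k + 1 ∧ 1 + k / 2 + k + 1 ≤ i + p); omega)]
      show decide (1 + k / 2 ≤ i ∧ i ≤ 1 + k / 2 + k) = false
      rw [decide_eq_false_iff_not]
      omega
    rw [gammaTilde_eq00 hk v hb1 hb2]
    constructor
    · have h := le_card_filter k 1 i (by omega) (fun t : Fin (k+1) => 1 ≤ (t:ℕ) ∧ (t:ℕ) ≤ k/2 ∧ v t = true) (fun t h1 h2 => by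
        have hlt := t.isLt
        refine ⟨h1, by omega, ?_⟩
        rw [hvt t h1 (by omega) (by omega), decide_eq_true_eq]
        omega)
      omega
    · have h := card_filter_le k 1 (i + p) (by omega) (fun t : Fin (k+1) => 1 ≤ (t:ℕ) ∧ (t:ℕ) ≤ k/2 ∧ v t = true) (fun t ht => by
        have hlt := t.isLt
        obtain ⟨h1, h2, h3⟩ := ht
        refine ⟨h1, ?_⟩
        by_contra hc
        push_neg at hc
        rw [hvt t h1 (by omega) (by omega), decide_eq_true_eq] at h3
        omega)
      omega
  · rcases le_or_gt i (k / 2) with hB | hnB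
    · -- Case B : i ≤ k/2 < i + p
      have hb1 : v 0 = false := hv0 (by omega)
      rcases Bool.dichotomy (v ⟨1 + k / 2, by omega⟩) with hb2 | hb2
      · rw [gammaTilde_eq00 hk v hb1 hb2]
        constructor
        · have h := le_card_filter k 1 i (by omega) (fun t : Fin (k+1) => 1 ≤ (t:ℕ) ∧ (t:ℕ) ≤ k/2 ∧ v t = true) (fun t h1 h2 => by
            have hlt := t.isLt
            refine ⟨h1, by omega, ?_⟩
            rw [hvt t h1 (by omega) (by omega), decide_eq_true_eq]
            omega)
          omega
        · have h := card_filter_le k 1 (k / 2) (by omega) (fun t : Fin (k+1) => 1 ≤ (t:ℕ) ∧ (t:ℕ) ≤ k/2 ∧ v t = true)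
            (fun t ht => ⟨ht.1, ht.2.1⟩)
          omega
      · rw [gammaTilde_eq01 hk v hb1 hb2]
        constructor
        · omega
        · have h := card_filter_le k (2 + k / 2) (i + p) (by omega) (fun t : Fin (k+1) => 2 + k/2 ≤ (t:ℕ) ∧ v t = true) (fun t ht => by
            have hlt := t.isLt
            obtain ⟨h1, h3⟩ := ht
            refine ⟨h1, ?_⟩
            by_contra hc
            push_neg at hc
            rw [hvt t (by omega) (by omega) (by omega), decide_eq_true_eq] at h3
            omega)
          omega
    · rcases le_or_gt (i + p) k with hC | hnC
      · -- Case C : k/2 < i, i + p ≤ k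
        have hb1 : v 0 = false := hv0 (by omega)
        have hb2 : v ⟨1 + k / 2, by omega⟩ = true := by
          rw [hvt ⟨1 + k / 2, by omega⟩ (by show 1 ≤ 1 + k / 2; omega)
            (by show ¬(i < 1 + k / 2 ∧ 1 + k / 2 ≤ i + p); omega)
            (by show ¬(i < 1 + k / 2 + k + 1 ∧ 1 + k / 2 + k + 1 ≤ i + p); omega)]
          show decide (1 + k / 2 ≤ i ∧ i ≤ 1 + k / 2 + k) = true
          rw [decide_eq_true_eq]
          omega
        rw [gammaTilde_eq01 hk v hb1 hb2]
        constructor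
        · have h := le_card_filter k (2 + k / 2) i (by omega) (fun t : Fin (k+1) => 2 + k/2 ≤ (t:ℕ) ∧ v t = true) (fun t h1 h2 => by
            have hlt := t.isLt
            refine ⟨h1, ?_⟩
            rw [hvt t (by omega) (by omega) (by omega), decide_eq_true_eq]
            omega)
          omega
        · have h := card_filter_le k (2 + k / 2) (i + p) (by omega) (fun t : Fin (k+1) => 2 + k/2 ≤ (t:ℕ) ∧ v t = true) (fun t ht => by
            have hlt := t.isLt
            obtain ⟨h1, h3⟩ := ht
            refine ⟨h1, ?_⟩
            by_contra hc
            push_neg at hc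
            rw [hvt t (by omega) (by omega) (by omega), decide_eq_true_eq] at h3
            omega)
          omega
      · -- Case D : k/2 < i ≤ k < i + p ≤ k + (k+1)/2
        have hb2 : v ⟨1 + k / 2, by omega⟩ = true := by
          rw [hvt ⟨1 + k / 2, by omega⟩ (by show 1 ≤ 1 + k / 2; omega)
            (by show ¬(i < 1 + k / 2 ∧ 1 + k / 2 ≤ i + p); omega)
            (by show ¬(i < 1 + k / 2 + k + 1 ∧ 1 + k / 2 + k + 1 ≤ i + p); omega)]
          show decide (1 + k / 2 ≤ i ∧ i ≤ 1 + k / 2 + k) = true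
          rw [decide_eq_true_eq]
          omega
        rcases Bool.dichotomy (v 0) with hb1 | hb1
        · rw [gammaTilde_eq01 hk v hb1 hb2]
          constructor
          · have h := le_card_filter k (2 + k / 2) i (by omega) (fun t : Fin (k+1) => 2 + k/2 ≤ (t:ℕ) ∧ v t = true) (fun t h1 h2 => by
              have hlt := t.isLt
              refine ⟨h1, ?_⟩
              rw [hvt t (by omega) (by omega) (by omega), decide_eq_true_eq]
              omega)
            omega
          · have h := card_filter_le k (2 + k / 2) k (by omega) (fun t : Fin (k+1) => 2 + k/2 ≤ (t:ℕ) ∧ v t = true) (fun t ht => by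
              have hlt := t.isLt
              exact ⟨ht.1, by omega⟩)
            omega
        · rw [gammaTilde_eq11 hk v hb1 hb2]
          constructor
          · omega
          · have h := card_filter_le k 1 (i + p - (k + 1)) (by omega) (fun t : Fin (k+1) => 1 ≤ (t:ℕ) ∧ (t:ℕ) ≤ k/2 ∧ v t = false) (fun t ht => by
              have hlt := t.isLt
              obtain ⟨h1, h2, h3⟩ := ht
              refine ⟨h1, ?_⟩
              by_contra hc
              push_neg at hc
              rw [hvt t h1 (by omega) (by omega), decide_eq_false_iff_not] at h3
              omega)
            omega

end Core
section Compl
open Finset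

lemma tilde_compl (k : ℕ) (hk : 1 ≤ k) (w : Fin (k + 1) → Bool) :
    (gammaTilde k hk w ≤ k ∧
      gammaTilde k hk (fun t => !(w t)) = gammaTilde k hk w + (k + 1)) ∨
    (gammaTilde k hk (fun t => !(w t)) ≤ k ∧
      gammaTilde k hk w = gammaTilde k hk (fun t => !(w t)) + (k + 1)) := by
  have hnot0 : (fun t : Fin (k+1) => !(w t)) 0 = !(w 0) := rfl
  have hnotT : (fun t : Fin (k+1) => !(w t)) ⟨1 + k / 2, by omega⟩
      = !(w ⟨1 + k / 2, by omega⟩) := rfl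
  rcases Bool.dichotomy (w 0) with hb1 | hb1 <;>
    rcases Bool.dichotomy (w ⟨1 + k / 2, by omega⟩) with hb2 | hb2
  · -- (0,0)
    left
    rw [gammaTilde_eq00 hk w hb1 hb2,
      gammaTilde_eq11 hk _ (by simp [hb1]) (by simp [hb2])]
    have h := card_filter_le k 1 (k / 2) (by omega)
      (fun t : Fin (k+1) => 1 ≤ (t:ℕ) ∧ (t:ℕ) ≤ k/2 ∧ w t = true)
      (fun t ht => ⟨ht.1, ht.2.1⟩)
    constructor
    · omega
    · have he : (Finset.univ.filter (fun t : Fin (k + 1) =>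
          1 ≤ (t : ℕ) ∧ (t : ℕ) ≤ k / 2 ∧ (!(w t)) = false)).card
          = (Finset.univ.filter (fun t : Fin (k + 1) =>
          1 ≤ (t : ℕ) ∧ (t : ℕ) ≤ k / 2 ∧ w t = true)).card := by
        congr 1
        apply Finset.filter_congr
        intro t _
        simp
      rw [he]
      omega
  · -- (0,1)
    left
    rw [gammaTilde_eq01 hk w hb1 hb2,
      gammaTilde_eq10 hk _ (by simp [hb1]) (by simp [hb2])]
    have h := card_filter_le k (2 + k / 2) k (by omega)
      (fun t : Fin (k+1) => 2 + k/2 ≤ (t:ℕ) ∧ w t = true)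
      (fun t ht => ⟨ht.1, by have := t.isLt; omega⟩)
    constructor
    · omega
    · have he : (Finset.univ.filter (fun t : Fin (k + 1) =>
          2 + k / 2 ≤ (t : ℕ) ∧ (!(w t)) = false)).card
          = (Finset.univ.filter (fun t : Fin (k + 1) =>
          2 + k / 2 ≤ (t : ℕ) ∧ w t = true)).card := by
        congr 1
        apply Finset.filter_congr
        intro t _
        simp
      rw [he]
      omega
  · -- (1,0)
    right
    rw [gammaTilde_eq10 hk w hb1 hb2,
      gammaTilde_eq01 hk _ (by simp [hb1]) (by simp [hb2])]
    have h := card_filter_le k (2 + k / 2) k (by omega)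
      (fun t : Fin (k+1) => 2 + k/2 ≤ (t:ℕ) ∧ (!(w t)) = true)
      (fun t ht => ⟨ht.1, by have := t.isLt; omega⟩)
    constructor
    · omega
    · have he : (Finset.univ.filter (fun t : Fin (k + 1) =>
          2 + k / 2 ≤ (t : ℕ) ∧ w t = false)).card
          = (Finset.univ.filter (fun t : Fin (k + 1) =>
          2 + k / 2 ≤ (t : ℕ) ∧ (!(w t)) = true)).card := by
        congr 1
        apply Finset.filter_congr
        intro t _
        simp
      rw [he]
      omega
  · -- (1,1)
    right
    rw [gammaTilde_eq11 hk w hb1 hb2,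
      gammaTilde_eq00 hk _ (by simp [hb1]) (by simp [hb2])]
    have h := card_filter_le k 1 (k / 2) (by omega)
      (fun t : Fin (k+1) => 1 ≤ (t:ℕ) ∧ (t:ℕ) ≤ k/2 ∧ (!(w t)) = true)
      (fun t ht => ⟨ht.1, ht.2.1⟩)
    constructor
    · omega
    · have he : (Finset.univ.filter (fun t : Fin (k + 1) =>
          1 ≤ (t : ℕ) ∧ (t : ℕ) ≤ k / 2 ∧ w t = false)).card
          = (Finset.univ.filter (fun t : Fin (k + 1) =>
          1 ≤ (t : ℕ) ∧ (t : ℕ) ≤ k / 2 ∧ (!(w t)) = true)).card := by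
        congr 1
        apply Finset.filter_congr
        intro t _
        simp
      rw [he]
      omega

end Compl
/-- for every extended codeword `w` of `γ_{k+1,k} : [2(k+1)] → B^{k+1}`
of imprecision `p ≤ ⌈k/2⌉` and every resolution `v ∈ res(w)`, the modified decoding
function satisfies `γ̃^{-1}_{k+1,k}(v) ∈ r_w` (modulo `2(k+1)`). -/
theorem gammaTilde_recovers (k : ℕ) (hk : 1 ≤ k)
    (i : ℕ) (hi : i < 2 * (k + 1)) (p : ℕ) (hp : p ≤ (k + 1) / 2)
    (v : Fin (k + 1) → Bool)
    (hv : v ∈ res (extCW (gammaNK (k + 1) k) (2 * (k + 1)) i p)) :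
    ∃ j ≤ p, gammaTilde k hk v = (i + j) % (2 * (k + 1)) := by
  have hstab : ∀ (t : Fin (k + 1)) (b : Bool),
      (∀ j ≤ p, gg k ((i + j) % (2 * (k + 1))) t = b) → v t = b := by
    intro t b hb
    apply hv t b
    show starSet _ = some b
    apply starSet_eq_some
    · exact ⟨0, by omega, by
        rw [gammaNK_eq_gg k ((i + 0) % (2 * (k + 1))) (Nat.mod_lt _ (by omega)) t]
        exact hb 0 (by omega)⟩
    · rintro ⟨j, hj, hgb⟩
      rw [gammaNK_eq_gg k ((i + j) % (2 * (k + 1))) (Nat.mod_lt _ (by omega)) t] at hgb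
      rw [hb j hj] at hgb
      simp at hgb
  rcases le_or_gt i k with hik | hik
  · -- lower half : work with i directly
    have hstab0 : ∀ (t : Fin (k + 1)) (b : Bool),
        (∀ j ≤ p, gg k (i + j) t = b) → v t = b := by
      intro t b hb
      apply hstab t b
      intro j hj
      rw [Nat.mod_eq_of_lt (by omega)]
      exact hb j hj
    have hv0 : i + p ≤ k → v 0 = false := by
      intro hip
      apply hstab0 0 false
      intro j hj
      simp only [gg, Fin.val_zero, if_pos]
      rw [decide_eq_false_iff_not]
      omega
    have hvt : ∀ t : Fin (k + 1), 1 ≤ (t : ℕ) →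
        ¬(i < (t : ℕ) ∧ (t : ℕ) ≤ i + p) →
        ¬(i < (t : ℕ) + k + 1 ∧ (t : ℕ) + k + 1 ≤ i + p) →
        v t = decide ((t : ℕ) ≤ i ∧ i ≤ (t : ℕ) + k) := by
      intro t ht h1 h2
      apply hstab0
      intro j hj
      simp only [gg]
      rw [if_neg (by omega : ¬ (t : ℕ) = 0), decide_eq_decide]
      omega
    obtain ⟨hlo, hhi⟩ := core k hk i p hik hp v hv0 hvt
    refine ⟨gammaTilde k hk v - i, by omega, ?_⟩
    rw [show i + (gammaTilde k hk v - i) = gammaTilde k hk v by omega,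
      Nat.mod_eq_of_lt (by omega)]
  · -- upper half : reduce to i - (k+1) with complemented resolution
    have hik1 : k + 1 ≤ i := by omega
    set v' : Fin (k + 1) → Bool := fun t => !(v t) with hv'def
    have hstab1 : ∀ (t : Fin (k + 1)) (b : Bool),
        (∀ j ≤ p, gg k ((i - (k + 1)) + j) t = b) → v' t = b := by
      intro t b hb
      have hvt' : v t = !b := by
        apply hstab t (!b)
        intro j hj
        rcases le_or_gt (2 * (k + 1)) (i + j) with hc | hc
        · have e1 : (i + j) % (2 * (k + 1)) = (i + j) - 2 * (k + 1) := by
            rw [Nat.mod_eq_sub_mod hc, Nat.mod_eq_of_lt (by omega)]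
          have hbj := hb j hj
          rw [show (i - (k + 1)) + j = ((i + j) - 2 * (k + 1)) + (k + 1) by omega,
            ggc k _ (by omega) t] at hbj
          rw [e1, ← hbj, Bool.not_not]
        · have e1 : (i + j) % (2 * (k + 1)) = i + j := Nat.mod_eq_of_lt hc
          have hbj := hb j hj
          rw [e1, show i + j = ((i - (k + 1)) + j) + (k + 1) by omega,
            ggc k _ (by omega) t, hbj]
      simp [hv'def, hvt']
    have hv0' : (i - (k + 1)) + p ≤ k → v' 0 = false := by
      intro hip
      apply hstab1 0 false
      intro j hj
      simp only [gg, Fin.val_zero, if_pos]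
      rw [decide_eq_false_iff_not]
      omega
    have hvt' : ∀ t : Fin (k + 1), 1 ≤ (t : ℕ) →
        ¬(i - (k + 1) < (t : ℕ) ∧ (t : ℕ) ≤ (i - (k + 1)) + p) →
        ¬(i - (k + 1) < (t : ℕ) + k + 1 ∧ (t : ℕ) + k + 1 ≤ (i - (k + 1)) + p) →
        v' t = decide ((t : ℕ) ≤ i - (k + 1) ∧ i - (k + 1) ≤ (t : ℕ) + k) := by
      intro t ht h1 h2
      apply hstab1
      intro j hj
      simp only [gg]
      rw [if_neg (by omega : ¬ (t : ℕ) = 0), decide_eq_decide]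
      omega
    obtain ⟨hlo, hhi⟩ := core k hk (i - (k + 1)) p (by omega) hp v' hv0' hvt'
    have hvv : (fun t => !(v' t)) = v := by
      funext t
      simp [hv'def]
    rcases tilde_compl k hk v' with ⟨hle, heq⟩ | ⟨hle, heq⟩
    · rw [hvv] at heq
      refine ⟨gammaTilde k hk v' - (i - (k + 1)), by omega, ?_⟩
      rw [show i + (gammaTilde k hk v' - (i - (k + 1))) = gammaTilde k hk v' + (k + 1) by omega,
        Nat.mod_eq_of_lt (by omega)]
      omega
    · rw [hvv] at hle heq
      refine ⟨gammaTilde k hk v' - (i - (k + 1)), by omega, ?_⟩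
      rw [show i + (gammaTilde k hk v' - (i - (k + 1)))
          = gammaTilde k hk v + 2 * (k + 1) by omega,
        Nat.add_mod_right, Nat.mod_eq_of_lt (by omega)]
end
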